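/- Let d = 2, W(x) = |x| (Euclidean norm), Δx_1 = Δx_2 = 1, and p ∈ (0,1). Let ρ^0 be the probability measure on ℝ² charging the points (0,0), (1,0) and (0,1) with respective weights 1 − p, p/2 and p/2, and let ρ^1 be the probability measure obtained from ρ^0 by one step of the upwind scheme with time step Δt. Then there exists a constant C ≥ 0, depending only on p, such that for all Δt ∈ (0, 1/4): |∬_{ℝ²×ℝ²} |x − y| ρ^1(dx) ρ^1(dy) − ∬_{ℝ²×ℝ²} |x − y| ρ^0(dx) ρ^0(dy) − (√2 − 1) p² (2p − 1) Δt| ≤ C Δt². In particular, for p > 1/2 the interaction potential increases at first order in Δt. -/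

import Mathlib

/-!
The velocity field of `ρ⁰` is `(p/2, p/2)` at the origin, `(-(1 - p + p/(2√2)), p/(2√2))` at
`(1,0)` and its mirror image at `(0,1)`. From the signs of these velocities, one upwind step keeps
the mass on the unit square, the new node `(1,1)` receiving `Δt p²/(2√2)`. There the interaction
potential is an explicit quadratic form in the four weights, so its change is a polynomial in `Δt`:
the linear coefficient is `(√2 - 1) p² (2p - 1)` and the quadratic one is `-(2 - √2) p⁴ / 2`.
-/

open MeasureTheory Real Set
open scoped RealInnerProductSpace ENNReal

noncomputable section

/-- `ℝ²` with the Euclidean structure. -/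
abbrev Euc2 := EuclideanSpace ℝ (Fin 2)

/-- Positive part `r⁺ = max(r,0)`. -/
def pos (r : ℝ) : ℝ := max r 0

/-- Negative part `r⁻ = max(-r,0)`. -/
def neg (r : ℝ) : ℝ := max (-r) 0

open Classical in
/-- `∇̂W` for `W(x) = |x|`: equal to `x/|x|` away from `0`, and `0` at `0`. -/
def hatS (x : Euc2) : Euc2 := if x = 0 then 0 else ‖x‖⁻¹ • x

/-- The node `x_J = (J_1, J_2)` (mesh steps `Δx_1 = Δx_2 = 1`). -/
def node2 (J : ℤ × ℤ) : Euc2 :=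
  (EuclideanSpace.equiv (Fin 2) ℝ).symm ![(J.1 : ℝ), (J.2 : ℝ)]

/-- The canonical basis vectors of `ℤ²`. -/
def eVec : Fin 2 → ℤ × ℤ := ![(1, 0), (0, 1)]

/-- The initial weights: mass `1-p` at `(0,0)`, `p/2` at `(1,0)` and `p/2` at `(0,1)`. -/
def ρ0w (p : ℝ) (J : ℤ × ℤ) : ℝ :=
  if J = (0, 0) then 1 - p else if J = (1, 0) then p / 2 else if J = (0, 1) then p / 2 else 0

/-- The interaction potential `∬ |x-y| ρ(dx) ρ(dy)` of a discrete distribution of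
weights `w` on the nodes of the grid. -/
def interact (w : ℤ × ℤ → ℝ) : ℝ :=
  ∑' q : (ℤ × ℤ) × (ℤ × ℤ), w q.1 * w q.2 * ‖node2 q.1 - node2 q.2‖

lemma node2_sub (J K : ℤ × ℤ) : node2 J - node2 K = node2 (J - K) := by
  ext i; fin_cases i <;> simp [node2]

lemma norm_node2 (J : ℤ × ℤ) : ‖node2 J‖ = √((J.1 : ℝ) ^ 2 + (J.2 : ℝ) ^ 2) := by
  simp [EuclideanSpace.norm_eq, Fin.sum_univ_two, node2]

lemma node2_eq_zero_iff {J : ℤ × ℤ} : node2 J = 0 ↔ J = 0 := by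
  simp [node2, Prod.ext_iff]

lemma hatS_node2 (J : ℤ × ℤ) (i : Fin 2) :
    hatS (node2 J) i = (√((J.1 : ℝ) ^ 2 + (J.2 : ℝ) ^ 2))⁻¹ * node2 J i := by
  by_cases hJ : J = 0
  · simp [hatS, hJ, node2]
  · rw [hatS, if_neg (node2_eq_zero_iff.not.2 hJ), PiLp.smul_apply, norm_node2, smul_eq_mul]

lemma tsum_ρ0w_mul (p : ℝ) (f : ℤ × ℤ → ℝ) :
    ∑' K, ρ0w p K * f K = (1 - p) * f (0, 0) + p / 2 * f (1, 0) + p / 2 * f (0, 1) := by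
  rw [tsum_eq_sum (s := {(0, 0), (1, 0), (0, 1)}) fun K hK => by simp_all [ρ0w]]
  simp [ρ0w, add_assoc]

def velocity (p : ℝ) (J : ℤ × ℤ) (i : Fin 2) : ℝ :=
  -∑' K, ρ0w p K * hatS (node2 J - node2 K) i

lemma velocity_zero (p : ℝ) (i : Fin 2) : velocity p 0 i = p / 2 := by
  simp only [velocity, tsum_ρ0w_mul, node2_sub, hatS_node2]
  fin_cases i <;> norm_num [node2]

lemma velocity_one_zero (p : ℝ) : velocity p (1, 0) = ![-(1 - p + p / (2 * √2)), p / (2 * √2)] := by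
  ext i
  simp only [velocity, tsum_ρ0w_mul, node2_sub, hatS_node2]
  fin_cases i <;> norm_num [node2] <;> ring

lemma velocity_zero_one (p : ℝ) : velocity p (0, 1) = ![p / (2 * √2), -(1 - p + p / (2 * √2))] := by
  ext i
  simp only [velocity, tsum_ρ0w_mul, node2_sub, hatS_node2]
  fin_cases i <;> norm_num [node2] <;> ring

lemma pos_eq_self_of_nonneg {r : ℝ} (h : 0 ≤ r) : pos r = r := max_eq_left h
lemma pos_eq_zero_of_nonpos {r : ℝ} (h : r ≤ 0) : pos r = 0 := max_eq_right h
lemma neg_eq_zero_of_nonneg {r : ℝ} (h : 0 ≤ r) : neg r = 0 := max_eq_right (by linarith)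
lemma neg_eq_neg_of_nonpos {r : ℝ} (h : r ≤ 0) : neg r = -r := max_eq_left (by linarith)

def upwindStep (Δt : ℝ) (a : ℤ × ℤ → Fin 2 → ℝ) (ρ : ℤ × ℤ → ℝ) (J : ℤ × ℤ) : ℝ :=
  ρ J - ∑ i : Fin 2, Δt *
    (pos (a J i) * ρ J - neg (a (J + eVec i) i) * ρ (J + eVec i)
      - pos (a (J - eVec i) i) * ρ (J - eVec i) + neg (a J i) * ρ J)

/- Each of `(1,0)`, `(0,1)` sends `Δt (1 - p + p/(2√2)) p/2` to the origin and `Δt p²/(4√2)` to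
`(1,1)`, while the origin sends `Δt p (1 - p)/2` to each of them. -/
def ρ1w (p Δt : ℝ) (J : ℤ × ℤ) : ℝ :=
  if J = (0, 0) then 1 - p + Δt * p ^ 2 / (2 * √2)
  else if J = (1, 0) ∨ J = (0, 1) then p / 2 - Δt * p ^ 2 / (2 * √2)
  else if J = (1, 1) then Δt * p ^ 2 / (2 * √2)
  else 0

lemma ρ0w_eq_zero {p : ℝ} {m n : ℤ} (h : ¬(0 ≤ m ∧ m ≤ 1 ∧ 0 ≤ n ∧ n ≤ 1)) :
    ρ0w p (m, n) = 0 := by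
  simp only [ρ0w, Prod.mk.injEq]
  split_ifs <;> first | rfl | omega

lemma upwindStep_velocity_ρ0w {p : ℝ} (hp0 : 0 ≤ p) (hp1 : p ≤ 1) (Δt : ℝ) :
    upwindStep Δt (velocity p) (ρ0w p) = ρ1w p Δt := by
  have hc : 0 ≤ p / (2 * √2) := by positivity
  have hb : 0 ≤ 1 - p + p / (2 * √2) := by linarith
  have hO (i : Fin 2) : pos (velocity p 0 i) = p / 2 ∧ neg (velocity p 0 i) = 0 := by
    rw [velocity_zero]
    exact ⟨pos_eq_self_of_nonneg (by positivity), neg_eq_zero_of_nonneg (by positivity)⟩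
  have hE0 : pos (velocity p (1, 0) 0) = 0 ∧ neg (velocity p (1, 0) 0) = 1 - p + p / (2 * √2) ∧
      pos (velocity p (1, 0) 1) = p / (2 * √2) ∧ neg (velocity p (1, 0) 1) = 0 := by
    simp only [velocity_one_zero, Matrix.cons_val_zero, Matrix.cons_val_one]
    exact ⟨pos_eq_zero_of_nonpos (by linarith),
      (neg_eq_neg_of_nonpos (by linarith)).trans (neg_neg _),
      pos_eq_self_of_nonneg hc, neg_eq_zero_of_nonneg hc⟩
  have hE1 : pos (velocity p (0, 1) 0) = p / (2 * √2) ∧ neg (velocity p (0, 1) 0) = 0 ∧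
      pos (velocity p (0, 1) 1) = 0 ∧ neg (velocity p (0, 1) 1) = 1 - p + p / (2 * √2) := by
    simp only [velocity_zero_one, Matrix.cons_val_zero, Matrix.cons_val_one]
    exact ⟨pos_eq_self_of_nonneg hc, neg_eq_zero_of_nonneg hc,
      pos_eq_zero_of_nonpos (by linarith),
      (neg_eq_neg_of_nonpos (by linarith)).trans (neg_neg _)⟩
  ext ⟨m, n⟩
  by_cases hbox : -1 ≤ m ∧ m ≤ 2 ∧ -1 ≤ n ∧ n ≤ 2
  · obtain ⟨h1, h2, h3, h4⟩ := hbox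
    interval_cases m <;> interval_cases n <;>
      simp [upwindStep, ρ1w, ρ0w, eVec, hO, hE0, hE1, Prod.mk_zero_zero] <;> ring
  · have hstep : ρ1w p Δt (m, n) = 0 := by
      simp only [ρ1w, Prod.mk.injEq]
      split_ifs <;> first | rfl | omega
    simp only [upwindStep, hstep, Fin.sum_univ_two, eVec, Matrix.cons_val_zero,
      Matrix.cons_val_one, Prod.mk_add_mk, Prod.mk_sub_mk, add_zero, sub_zero]
    rw [ρ0w_eq_zero (by omega), ρ0w_eq_zero (by omega), ρ0w_eq_zero (by omega),
      ρ0w_eq_zero (by omega), ρ0w_eq_zero (by omega)]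
    ring

lemma interact_eq_sum_of_support_subset (w : ℤ × ℤ → ℝ) (s : Finset (ℤ × ℤ))
    (hw : ∀ J ∉ s, w J = 0) :
    interact w = ∑ J ∈ s, ∑ K ∈ s, w J * w K * ‖node2 J - node2 K‖ := by
  rw [interact, tsum_eq_sum (s := s ×ˢ s), Finset.sum_product]
  intro q hq
  rcases not_and_or.1 (Finset.mem_product.not.1 hq) with hq | hq <;> simp [hw _ hq]

lemma interact_eq_of_support_subset_unitSquare (w : ℤ × ℤ → ℝ)
    (hw : ∀ J ∉ ({(0, 0), (1, 0), (0, 1), (1, 1)} : Finset (ℤ × ℤ)), w J = 0) :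
    interact w = 2 * (w (0, 0) * w (1, 0) + w (0, 0) * w (0, 1) + w (1, 0) * w (1, 1)
        + w (0, 1) * w (1, 1)) + 2 * √2 * (w (0, 0) * w (1, 1) + w (1, 0) * w (0, 1)) := by
  rw [interact_eq_sum_of_support_subset w _ hw]
  norm_num [Finset.sum_insert, node2_sub, norm_node2]
  ring

lemma interact_ρ1w_sub_interact_ρ0w (p Δt : ℝ) :
    interact (ρ1w p Δt) - interact (ρ0w p)
      = (√2 - 1) * p ^ 2 * (2 * p - 1) * Δt - (2 - √2) / 2 * p ^ 4 * Δt ^ 2 := by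
  rw [interact_eq_of_support_subset_unitSquare _ fun J hJ => by simp_all [ρ1w],
    interact_eq_of_support_subset_unitSquare _ fun J hJ => by simp_all [ρ0w]]
  simp [ρ1w, ρ0w]
  have hsq : √2 ^ 2 = 2 := Real.sq_sqrt (by norm_num)
  field_simp
  linear_combination
    (2 * p ^ 2 * √2 * Δt - 4 * p ^ 3 * √2 * Δt + 2 * p ^ 4 * Δt ^ 2 - p ^ 4 * √2 * Δt ^ 2) * hsq

/-- One step of the upwind scheme for `W(x) = |x|` may increase the interaction potential:
it changes at first order by `(√2 - 1) p² (2p - 1) Δt`. -/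
theorem stmt9 (p : ℝ) (hp0 : 0 < p) (hp1 : p < 1) :
    ∃ C : ℝ, 0 ≤ C ∧ ∀ Δt : ℝ, 0 < Δt → Δt < 1 / 4 →
      ∀ (a : ℤ × ℤ → Fin 2 → ℝ) (ρ1 : ℤ × ℤ → ℝ),
        (∀ J i, a J i = -∑' K : ℤ × ℤ, ρ0w p K * hatS (node2 J - node2 K) i) →
        (∀ J, ρ1 J = ρ0w p J - ∑ i : Fin 2, Δt *
          (pos (a J i) * ρ0w p J - neg (a (J + eVec i) i) * ρ0w p (J + eVec i)
            - pos (a (J - eVec i) i) * ρ0w p (J - eVec i) + neg (a J i) * ρ0w p J)) →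
        |interact ρ1 - interact (ρ0w p)
            - (Real.sqrt 2 - 1) * p ^ 2 * (2 * p - 1) * Δt| ≤ C * Δt ^ 2 := by
  have hC : 0 ≤ (2 - √2) / 2 * p ^ 4 := by
    have : √2 ≤ 2 := Real.sqrt_le_iff.2 ⟨by norm_num, by norm_num⟩
    have : 0 ≤ 2 - √2 := by linarith
    positivity
  refine ⟨(2 - √2) / 2 * p ^ 4, hC, fun Δt _ _ a ρ1 ha hρ1 => ?_⟩
  obtain rfl : a = velocity p := funext fun J => funext (ha J)
  obtain rfl : ρ1 = ρ1w p Δt :=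
    (funext hρ1).trans (upwindStep_velocity_ρ0w hp0.le hp1.le Δt)
  rw [interact_ρ1w_sub_interact_ρ0w, sub_sub_cancel_left, abs_neg,
    abs_of_nonneg (by positivity)]
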